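/- Let n>2 be an integer and g a nonnegative integer with gcd(n,g)=1. Set p_n = P_1 − 2P_n + Σ_{i=1}^{n−2} P_i·(P_n/(P_1 − P_{n+1}))^{n−(i+1)}, and assume p_n ≠ 0. Then the inverse of C_{n,g}(P) equals (1/p_n)·C·Q_gᵀ, where C is the circulant matrix with first row (c_0,…,c_{n−1}) given by c_0 = 1 + Σ_{i=1}^{n−2} P_{n−i}P_n^{i−1}/(P_1 − P_{n+1})^i, c_1 = −2 + Σ_{i=1}^{n−2} P_{n−1−i}P_n^{i−1}/(P_1 − P_{n+1})^i, and c_j = −P_n^{j−2}/(P_1 − P_{n+1})^{j−1} for 2 ≤ j ≤ n−1. -/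

import Mathlib

open Matrix

/-- The `g`-circulant matrix of size `n` with first row `(a 0, a 1, …, a (n-1))`:
its `(i,j)` entry (0-indexed) equals `a ((j - i*g) mod n)`. -/
def gCirc {α : Type*} (n g : ℕ) (a : ℕ → α) : Matrix (Fin n) (Fin n) α :=
  Matrix.of fun i j => a ((j.val + (n - (i.val * g) % n)) % n)

/-- `Q_g`: the `g`-circulant matrix with first row `(1,0,…,0)`. -/
def Qg (n g : ℕ) : Matrix (Fin n) (Fin n) ℝ :=
  gCirc n g (fun m => if m = 0 then (1 : ℝ) else 0)

/-- `circ c`: the circulant (`1`-circulant) matrix with first row `(c 0, …, c (n-1))`. -/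
def circ (n : ℕ) (c : ℕ → ℝ) : Matrix (Fin n) (Fin n) ℝ :=
  gCirc n 1 c

open Fin.NatCast Fin.CommRing

section Aux

variable {n : ℕ} [NeZero n]

lemma mul_cast_eq (g : ℕ) (i : Fin n) : i * (g : Fin n) = ((i.val * g : ℕ) : Fin n) := by
  push_cast [Fin.cast_val_eq_self]; ring

lemma sub_mul_val (g : ℕ) (i j : Fin n) :
    (j - i * (g : Fin n)).val = (j.val + (n - (i.val * g) % n)) % n := by
  rw [mul_cast_eq, Fin.sub_def]
  have h3 : (((i.val * g : ℕ) : Fin n)).val = (i.val * g) % n := Fin.val_natCast _ _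
  rw [h3, Nat.add_comm]

lemma gCirc_apply (g : ℕ) (a : ℕ → ℝ) (i j : Fin n) :
    gCirc n g a i j = a ((j - i * (g : Fin n)).val) := by
  rw [sub_mul_val]; rfl

def circF (f : Fin n → ℝ) : Matrix (Fin n) (Fin n) ℝ :=
  Matrix.of fun i j => f (j - i)

lemma circ_eq_circF (c : ℕ → ℝ) : circ n c = circF (fun d => c d.val) := by
  ext i j
  rw [circ, gCirc_apply]
  simp [circF]

lemma Qg_apply (g : ℕ) (i j : Fin n) :
    Qg n g i j = if j = i * (g : Fin n) then 1 else 0 := by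
  rw [Qg, gCirc_apply]
  by_cases h : j = i * (g : Fin n)
  · simp [h, sub_self]
  · have h2 : j - i * (g : Fin n) ≠ 0 := fun hh => h (by rwa [sub_eq_zero] at hh)
    have h3 : (j - i * (g : Fin n)).val ≠ 0 := fun hv => h2 (Fin.ext (by simpa using hv))
    simp [h, h3]

lemma circF_mul (f g : Fin n → ℝ) :
    circF f * circF g = circF (fun t => ∑ m : Fin n, f m * g (t - m)) := by
  ext i j
  simp only [circF, Matrix.mul_apply, Matrix.of_apply]
  refine Fintype.sum_equiv (Equiv.subRight i) _ _ (fun k => ?_)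
  simp only [Equiv.subRight_apply, sub_sub_sub_cancel_right]

lemma circF_one : circF (fun t : Fin n => if t = 0 then (1:ℝ) else 0) = 1 := by
  ext i j
  simp only [circF, Matrix.of_apply, Matrix.one_apply, sub_eq_zero]
  by_cases h : i = j
  · simp [h]
  · simp [h, Ne.symm h]

omit [NeZero n] in
lemma circF_smul (s : ℝ) (f : Fin n → ℝ) :
    circF (fun t => s * f t) = s • circF f := by
  ext i j; simp [circF]

lemma fin_sub_eq_iff (t m y : Fin n) : t - m = y ↔ m = t - y :=
  ⟨fun h => by rw [← h, sub_sub_cancel], fun h => by rw [h, sub_sub_cancel]⟩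

lemma val_sub_le (d e : Fin n) (h : e.val ≤ d.val) :
    (d - e).val = d.val - e.val := by
  have h1 := d.isLt; have h2 := e.isLt
  rw [Fin.sub_def]
  show (n - e.val + d.val) % n = d.val - e.val
  rw [show n - e.val + d.val = n + (d.val - e.val) by omega, Nat.add_mod_left,
    Nat.mod_eq_of_lt (by omega)]

lemma val_sub_gt (d e : Fin n) (h : d.val < e.val) :
    (d - e).val = d.val + n - e.val := by
  have h1 := d.isLt; have h2 := e.isLt
  rw [Fin.sub_def]
  show (n - e.val + d.val) % n = d.val + n - e.val
  rw [show n - e.val + d.val = d.val + n - e.val by omega, Nat.mod_eq_of_lt (by omega)]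

lemma sub_ne_self (t y : Fin n) (hy : y ≠ 0) : t - y ≠ t := by
  intro h
  apply hy
  have h2 := congrArg (fun z => t - z) h
  simpa [sub_sub_cancel] using h2

lemma sum_mul_ite3 (f : Fin n → ℝ) (x y z : Fin n) (a b c : ℝ)
    (hxy : x ≠ y) (hxz : x ≠ z) (hyz : y ≠ z) :
    ∑ m : Fin n, f m * (if m = x then a else if m = y then b else if m = z then c else 0)
      = f x * a + f y * b + f z * c := by
  have h : ∀ m : Fin n, f m * (if m = x then a else if m = y then b else if m = z then c else 0)
      = (if m = x then f x * a else 0) + (if m = y then f y * b else 0)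
        + (if m = z then f z * c else 0) := by
    intro m
    by_cases h1 : m = x
    · subst h1; simp [hxy, hxz]
    · by_cases h2 : m = y
      · subst h2; simp [h1, hyz]
      · by_cases h3 : m = z
        · subst h3; simp [Ne.symm hxz, Ne.symm hyz]
        · simp [h1, h2, h3]
  rw [Finset.sum_congr rfl (fun m _ => h m)]
  rw [Finset.sum_add_distrib, Finset.sum_add_distrib]
  simp

lemma ite3_sum_mul (g : Fin n → ℝ) (x y z : Fin n) (a b c : ℝ)
    (hxy : x ≠ y) (hxz : x ≠ z) (hyz : y ≠ z) :
    ∑ m : Fin n, (if m = x then a else if m = y then b else if m = z then c else 0) * g m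
      = a * g x + b * g y + c * g z := by
  have h : ∀ m : Fin n, (if m = x then a else if m = y then b else if m = z then c else 0) * g m
      = (if m = x then a * g x else 0) + (if m = y then b * g y else 0)
        + (if m = z then c * g z else 0) := by
    intro m
    by_cases h1 : m = x
    · subst h1; simp [hxy, hxz]
    · by_cases h2 : m = y
      · subst h2; simp [h1, hyz]
      · by_cases h3 : m = z
        · subst h3; simp [Ne.symm hxz, Ne.symm hyz]
        · simp [h1, h2, h3]
  rw [Finset.sum_congr rfl (fun m _ => h m)]
  rw [Finset.sum_add_distrib, Finset.sum_add_distrib]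
  simp

lemma ite2_sum_mul (g : Fin n → ℝ) (x y : Fin n) (a b : ℝ) (hxy : x ≠ y) :
    ∑ m : Fin n, (if m = x then a else if m = y then b else 0) * g m
      = a * g x + b * g y := by
  have h : ∀ m : Fin n, (if m = x then a else if m = y then b else 0) * g m
      = (if m = x then a * g x else 0) + (if m = y then b * g y else 0) := by
    intro m
    by_cases h1 : m = x
    · subst h1; simp [hxy]
    · by_cases h2 : m = y
      · subst h2; simp [Ne.symm hxy]
      · simp [h1, h2]
  rw [Finset.sum_congr rfl (fun m _ => h m)]
  rw [Finset.sum_add_distrib]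
  simp

end Aux

set_option maxHeartbeats 1000000 in
/-- The inverse of the g-circulant matrix of Pell numbers. -/
theorem inv_gCirc_pell
    (P : ℕ → ℝ) (hP0 : P 0 = 0) (hP1 : P 1 = 1)
    (hrec : ∀ m : ℕ, P (m + 2) = 2 * P (m + 1) + P m)
    (n r : ℕ) (hn : 2 < n) (hgcd : Nat.gcd n r = 1)
    (pn : ℝ)
    (hpn : pn = P 1 - 2 * P n +
        ∑ i ∈ Finset.Icc 1 (n - 2),
          P i * (P n / (P 1 - P (n + 1))) ^ (n - (i + 1)))
    (hpnne : pn ≠ 0)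
    (c : ℕ → ℝ)
    (hc0 : c 0 = 1 + ∑ i ∈ Finset.Icc 1 (n - 2),
        P (n - i) * P n ^ (i - 1) / (P 1 - P (n + 1)) ^ i)
    (hc1 : c 1 = -2 + ∑ i ∈ Finset.Icc 1 (n - 2),
        P (n - 1 - i) * P n ^ (i - 1) / (P 1 - P (n + 1)) ^ i)
    (hcj : ∀ j : ℕ, 2 ≤ j → j ≤ n - 1 →
        c j = -(P n ^ (j - 2) / (P 1 - P (n + 1)) ^ (j - 1))) :
    (gCirc n r (fun m => P (m + 1)))⁻¹ = (1 / pn) • (circ n c * (Qg n r)ᵀ) := by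
  haveI : NeZero n := ⟨by omega⟩
  -- Pell basics
  have hstep : ∀ m, 0 ≤ P m ∧ P m < P (m+1) := by
    intro m
    induction m with
    | zero => rw [hP0, hP1]; norm_num
    | succ k ih =>
      refine ⟨by linarith [ih.1, ih.2], ?_⟩
      rw [hrec]; nlinarith [ih.1, ih.2]
  have hsm : StrictMono P := strictMono_nat_of_lt_succ (fun m => (hstep m).2)
  have hP2 : P 2 = 2 := by have := hrec 0; rw [hP0, hP1] at this; linarith
  have hPn1 : 2 ≤ P (n+1) := by
    have := hsm.monotone (show 2 ≤ n+1 by omega); linarith [hP2]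
  set b := P 1 - P (n + 1) with hb
  have hbne : b ≠ 0 := by
    have hble : b ≤ -1 := by rw [hb, hP1]; linarith
    intro h; rw [h] at hble; linarith
  set α := P n / b with hα
  have hv : P n = α * b := by rw [hα]; field_simp
  have hr1 : P (n+1) = 2*P n + P (n-1) := by
    have h := hrec (n-1)
    rwa [show n-1+2 = n+1 by omega, show n-1+1 = n by omega] at h
  have hr2 : P n = 2*P (n-1) + P (n-2) := by
    have h := hrec (n-2)
    rwa [show n-2+2 = n by omega, show n-2+1 = n-1 by omega] at h
  have hu2 : P (n-1) = 1 - b - 2*(α*b) := by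
    rw [← hv]
    have hb' : b = P 1 - P (n+1) := hb
    rw [hP1, hr1] at hb'; linarith
  have hw2 : P (n-2) = α*b - 2*(1 - b - 2*(α*b)) := by
    rw [← hu2, ← hv]; linarith [hr2]
  have hI0 : b*(1+2*α-α^2) + P (n-1) + P n * α = 1 := by rw [hu2, hv]; ring
  have hI1 : -2*b*(1+2*α-α^2) + P (n-2) + P (n-1) * α = α - 2 := by
    rw [hw2, hu2]; ring
  have hIp : (1+2*α-α^2)*(1-2*P n) + α * P (n-2) + P (n-1) * α^2 = 1 := by
    rw [hw2, hu2, hv]; ring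
  -- key telescoping identity
  have key : ∀ m : ℕ, (1+2*α-α^2) * ∑ j ∈ Finset.Icc 1 m, P j * α^(m-j)
      = P m + P (m+1) * α - α^(m+1) := by
    intro m
    induction m with
    | zero => rw [Finset.Icc_eq_empty (by omega)]; simp [hP0, hP1]
    | succ k ih =>
      have hs : ∑ j ∈ Finset.Icc 1 (k+1), P j * α^(k+1-j)
          = α * (∑ j ∈ Finset.Icc 1 k, P j * α^(k-j)) + P (k+1) := by
        rw [Finset.sum_Icc_succ_top (Nat.le_add_left 1 k), Nat.sub_self, pow_zero, mul_one,
          Finset.mul_sum]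
        congr 1
        refine Finset.sum_congr rfl fun j hj => ?_
        rw [Finset.mem_Icc] at hj
        rw [show k+1-j = (k-j)+1 by omega, pow_succ]
        ring
      rw [hs, show k+1+1 = k+2 by omega, hrec k]
      linear_combination α * ih
  have hT2 := key (n-2)
  rw [show n-2+1 = n-1 by omega] at hT2
  have e1 : α^(n-1) = α^(n-2) * α := by rw [← pow_succ]; congr 1; omega
  have e2 : α^n = α^(n-2) * α^2 := by rw [← pow_add]; congr 1; omega
  rw [e1] at hT2
  have hT1 := key (n-1)
  rw [show n-1+1 = n by omega, e2] at hT1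
  -- sums rewritten
  have hpn2 : pn = 1 - 2*P n + α * (∑ j ∈ Finset.Icc 1 (n-2), P j * α^(n-2-j)) := by
    rw [hpn, hP1, Finset.mul_sum]
    congr 1
    refine Finset.sum_congr rfl fun i hi => ?_
    rw [Finset.mem_Icc] at hi
    rw [show n - (i+1) = (n-2-i)+1 by omega, pow_succ]
    ring
  have habq : ∀ i, 1 ≤ i → P n ^ (i-1)/b^i = α^(i-1)/b := by
    intro i h1
    rw [hα, div_pow, div_div]
    congr 1
    rw [← pow_succ]; congr 1; omega
  have hS1sum : ∑ i ∈ Finset.Icc 1 (n-2), P (n-1-i) * P n ^ (i-1) / b ^ i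
      = (∑ j ∈ Finset.Icc 1 (n-2), P j * α^(n-2-j)) / b := by
    rw [Finset.sum_div]
    refine Finset.sum_nbij' (fun i => n-1-i) (fun j => n-1-j) ?_ ?_ ?_ ?_ ?_
    · intro a ha; simp only [Finset.mem_Icc] at ha ⊢; omega
    · intro a ha; simp only [Finset.mem_Icc] at ha ⊢; omega
    · intro a ha; simp only [Finset.mem_Icc] at ha; show n-1-(n-1-a) = a; omega
    · intro a ha; simp only [Finset.mem_Icc] at ha; show n-1-(n-1-a) = a; omega
    · intro a ha; simp only [Finset.mem_Icc] at ha
      show P (n-1-a) * P n ^ (a-1) / b ^ a = P (n-1-a) * α^(n-2-(n-1-a)) / b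
      rw [show n-2-(n-1-a) = a-1 by omega, mul_div_assoc, habq a ha.1, mul_div_assoc]
  have hS0sum : ∑ i ∈ Finset.Icc 1 (n-2), P (n-i) * P n ^ (i-1) / b ^ i
      = ((∑ j ∈ Finset.Icc 1 (n-1), P j * α^(n-1-j)) - α^(n-2)) / b := by
    have step1 : ∑ i ∈ Finset.Icc 1 (n-2), P (n-i) * P n ^ (i-1) / b ^ i
        = ∑ j ∈ Finset.Icc 2 (n-1), P j * α^(n-1-j) / b := by
      refine Finset.sum_nbij' (fun i => n-i) (fun j => n-j) ?_ ?_ ?_ ?_ ?_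
      · intro a ha; simp only [Finset.mem_Icc] at ha ⊢; omega
      · intro a ha; simp only [Finset.mem_Icc] at ha ⊢; omega
      · intro a ha; simp only [Finset.mem_Icc] at ha; show n-(n-a) = a; omega
      · intro a ha; simp only [Finset.mem_Icc] at ha; show n-(n-a) = a; omega
      · intro a ha; simp only [Finset.mem_Icc] at ha
        show P (n-a) * P n ^ (a-1) / b ^ a = P (n-a) * α^(n-1-(n-a)) / b
        rw [show n-1-(n-a) = a-1 by omega, mul_div_assoc, habq a ha.1, mul_div_assoc]
    rw [step1, ← Finset.sum_div]
    congr 1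
    have hins : Finset.Icc 1 (n-1) = insert 1 (Finset.Icc 2 (n-1)) := by
      ext x; simp only [Finset.mem_Icc, Finset.mem_insert]; omega
    rw [hins, Finset.sum_insert (by simp [Finset.mem_Icc])]
    rw [hP1, show n-1-1 = n-2 by omega]; ring
  have hc0b : b * c 0 = b + ((∑ j ∈ Finset.Icc 1 (n-1), P j * α^(n-1-j)) - α^(n-2)) := by
    rw [hc0, hS0sum]; field_simp
  have hc1b : b * c 1 = -2*b + (∑ j ∈ Finset.Icc 1 (n-2), P j * α^(n-2-j)) := by
    rw [hc1, hS1sum]; field_simp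
  set γ := b * (1+2*α-α^2) with hγ
  have hG0 : γ * c 0 = 1 - 2*(α^(n-2)*α) - α^(n-2) := by
    have h1 : γ * c 0 = (1+2*α-α^2) * (b * c 0) := by rw [hγ]; ring
    rw [h1, hc0b]
    linear_combination hT1 + hI0
  have hG1 : γ * c 1 = α - 2 - α^(n-2)*α := by
    have h1 : γ * c 1 = (1+2*α-α^2) * (b * c 1) := by rw [hγ]; ring
    rw [h1, hc1b]
    linear_combination hT2 + hI1
  have hGp : γ * pn = b * (1 - α^(n-2)*α^2) := by
    rw [hγ, hpn2]
    linear_combination (b*α) * hT2 + b * hIp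
  have hγne : γ ≠ 0 := by
    intro h0
    have hq : 1 + 2*α - α^2 = 0 := by
      rcases mul_eq_zero.mp (hγ.symm.trans h0) with h | h
      · exact absurd h hbne
      · exact h
    have hα1 : α^n = 1 := by
      have h2 := hGp
      rw [h0, zero_mul] at h2
      have h3 : 1 - α^(n-2)*α^2 = 0 := by
        rcases mul_eq_zero.mp h2.symm with h | h
        · exact absurd h hbne
        · exact h
      rw [e2]; linarith
    have hsq : (α - 1)^2 = 2 := by linear_combination -hq
    have habs : |α| = 1 := by
      have hn0 : n ≠ 0 := by omega
      rcases lt_trichotomy |α| 1 with h | h | h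
      · have h4 := pow_lt_one₀ (abs_nonneg α) h hn0
        rw [← abs_pow, hα1] at h4; simp at h4
      · exact h
      · have h4 := one_lt_pow₀ h hn0
        rw [← abs_pow, hα1] at h4; simp at h4
    rcases (abs_eq (by norm_num : (0:ℝ) ≤ 1)).mp habs with h | h <;> rw [h] at hsq <;>
      norm_num at hsq
  have hGj : ∀ d : Fin n, 2 ≤ d.val →
      γ * c d.val = α^(d.val) - 2*α^(d.val - 1) - α^(d.val - 2) := by
    intro d hd
    have hlt := d.isLt
    have hd1 : d.val ≤ n - 1 := by omega
    rw [hcj d.val hd hd1, hγ, hv]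
    rw [mul_pow, show b^(d.val-1) = b^(d.val-2)*b by rw [← pow_succ]; congr 1; omega]
    rw [show α^(d.val) = α^(d.val-2)*α^2 by rw [← pow_add]; congr 1; omega,
        show α^(d.val-1) = α^(d.val-2)*α by rw [← pow_succ]; congr 1; omega]
    field_simp
    ring
  -- ===== matrix part =====
  have hv1 : ((1 : Fin n) : ℕ) = 1 := by
    rw [Fin.val_one']; exact Nat.mod_eq_of_lt (by omega)
  have hv2 : ((2 : Fin n) : ℕ) = 2 := by
    rw [show (2 : Fin n) = ((2:ℕ) : Fin n) by norm_cast, Fin.val_natCast]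
    exact Nat.mod_eq_of_lt hn
  have hv0 : ((0 : Fin n) : ℕ) = 0 := rfl
  have h01 : (0 : Fin n) ≠ 1 := by
    intro h; have h' := congrArg Fin.val h; rw [hv1, hv0] at h'; omega
  have h02 : (0 : Fin n) ≠ 2 := by
    intro h; have h' := congrArg Fin.val h; rw [hv2, hv0] at h'; omega
  have h12 : (1 : Fin n) ≠ 2 := by
    intro h; have h' := congrArg Fin.val h; rw [hv1, hv2] at h'; omega
  have hvne0 : ∀ t : Fin n, t ≠ 0 → t.val ≠ 0 := by
    intro t ht h; exact ht (Fin.ext (by rw [h, hv0]))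
  have hvge2 : ∀ t : Fin n, t ≠ 0 → t ≠ 1 → 2 ≤ t.val := by
    intro t ht0 ht1
    rcases Nat.lt_or_ge t.val 2 with h | h
    · have h' : t.val = 0 ∨ t.val = 1 := by omega
      rcases h' with h' | h'
      · exact absurd (Fin.ext (by rw [h', hv0])) ht0
      · exact absurd (Fin.ext (by rw [h', hv1])) ht1
    · exact h
  -- A * B = b • W
  have hAB : circF (fun d : Fin n => P (d.val + 1))
        * circF (fun t : Fin n => if t = 0 then (1:ℝ) else if t = 1 then -2 else
            if t = 2 then -1 else 0)
      = b • circF (fun t : Fin n => if t = 0 then (1:ℝ) else if t = 1 then -α else 0) := by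
    rw [circF_mul, ← circF_smul]
    refine congrArg circF (funext fun t => ?_)
    have d01 : t - 0 ≠ t - 1 := by
      rw [sub_zero]; exact (sub_ne_self t 1 (Ne.symm h01)).symm
    have d02 : t - 0 ≠ t - 2 := by
      rw [sub_zero]; exact (sub_ne_self t 2 (Ne.symm h02)).symm
    have d12 : t - 1 ≠ t - 2 := by
      intro h; exact h12 (sub_right_injective h)
    simp only [fin_sub_eq_iff]
    rw [sum_mul_ite3 _ (t - 0) (t - 1) (t - 2) 1 (-2) (-1) d01 d02 d12, sub_zero]
    by_cases ht0 : t = 0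
    · subst ht0
      rw [val_sub_gt 0 1 (by rw [hv1, hv0]; omega), val_sub_gt 0 2 (by rw [hv2, hv0]; omega)]
      rw [hv0, hv1, hv2, if_pos rfl]
      rw [show 0 + n - 1 + 1 = n by omega, show 0 + n - 2 + 1 = n - 1 by omega,
        show (0:ℕ) + 1 = 1 by omega, hP1]
      rw [hb, hP1, hr1]; ring
    · by_cases ht1 : t = 1
      · subst ht1
        rw [sub_self, val_sub_gt 1 2 (by rw [hv1, hv2]; omega)]
        rw [hv0, hv1, hv2, if_neg (Ne.symm h01), if_pos rfl]
        rw [show 1 + n - 2 + 1 = n by omega, show (1:ℕ) + 1 = 2 by omega,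
          show (0:ℕ) + 1 = 1 by omega, hP1, hP2]
        linear_combination -hv
      · have ht2 : 2 ≤ t.val := hvge2 t ht0 ht1
        rw [val_sub_le t 1 (by rw [hv1]; omega), val_sub_le t 2 (by rw [hv2]; omega),
          hv1, hv2, if_neg ht0, if_neg ht1]
        rw [show t.val - 1 + 1 = t.val by omega, show t.val - 2 + 1 = t.val - 1 by omega]
        have h := hrec (t.val - 1)
        rw [show t.val - 1 + 2 = t.val + 1 by omega, show t.val - 1 + 1 = t.val by omega] at h
        linarith
  -- W * S = (1 - α^n) • 1
  have hWS : circF (fun t : Fin n => if t = 0 then (1:ℝ) else if t = 1 then -α else 0)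
        * circF (fun t : Fin n => α ^ t.val)
      = (1 - α^(n-2)*α^2) • (1 : Matrix (Fin n) (Fin n) ℝ) := by
    rw [circF_mul, ← circF_one (n := n), ← circF_smul]
    refine congrArg circF (funext fun t => ?_)
    rw [ite2_sum_mul (fun m => α ^ ((t - m).val)) 0 1 1 (-α) h01, sub_zero]
    by_cases ht0 : t = 0
    · subst ht0
      rw [val_sub_gt 0 1 (by rw [hv1, hv0]; omega), hv0, hv1]
      rw [show 0 + n - 1 = n - 1 by omega, e1, if_pos rfl]
      ring
    · have htv := hvne0 t ht0
      rw [val_sub_le t 1 (by rw [hv1]; omega), hv1, if_neg ht0]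
      have hps : α ^ t.val = α ^ (t.val - 1) * α := by
        rw [← pow_succ]; congr 1; omega
      rw [hps]; ring
  -- γ • Cm = B * S
  have hCv : γ • circF (fun d : Fin n => c d.val)
      = circF (fun t : Fin n => if t = 0 then (1:ℝ) else if t = 1 then -2 else
          if t = 2 then -1 else 0) * circF (fun t : Fin n => α ^ t.val) := by
    rw [circF_mul, ← circF_smul]
    refine congrArg circF (funext fun d => ?_)
    rw [ite3_sum_mul (fun m => α ^ ((d - m).val)) 0 1 2 1 (-2) (-1) h01 h02 h12, sub_zero]
    by_cases hd0 : d = 0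
    · subst hd0
      rw [hv0, val_sub_gt 0 1 (by rw [hv1, hv0]; omega), val_sub_gt 0 2 (by rw [hv2, hv0]; omega)]
      rw [hv0, hv1, hv2, show 0 + n - 1 = n - 1 by omega, show 0 + n - 2 = n - 2 by omega]
      rw [hG0, e1]; ring
    · by_cases hd1 : d = 1
      · subst hd1
        rw [hv1, sub_self, val_sub_gt 1 2 (by rw [hv1, hv2]; omega)]
        rw [hv0, hv1, hv2, show 1 + n - 2 = n - 1 by omega, hG1, e1]
        ring
      · have hd2 : 2 ≤ d.val := hvge2 d hd0 hd1
        rw [val_sub_le d 1 (by rw [hv1]; omega), val_sub_le d 2 (by rw [hv2]; omega), hv1, hv2]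
        rw [hGj d hd2]; ring
  -- A * Cm = pn • 1
  have hACm : circF (fun d : Fin n => P (d.val + 1)) * circF (fun d : Fin n => c d.val)
      = pn • (1 : Matrix (Fin n) (Fin n) ℝ) := by
    apply smul_right_injective (Matrix (Fin n) (Fin n) ℝ) hγne
    calc γ • (circF (fun d : Fin n => P (d.val + 1)) * circF (fun d : Fin n => c d.val))
        = circF (fun d : Fin n => P (d.val + 1)) * (γ • circF (fun d : Fin n => c d.val)) := by
          rw [Matrix.mul_smul]
      _ = (circF (fun d : Fin n => P (d.val + 1))
            * circF (fun t : Fin n => if t = 0 then (1:ℝ) else if t = 1 then -2 else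
                if t = 2 then -1 else 0)) * circF (fun t : Fin n => α ^ t.val) := by
          rw [hCv, mul_assoc]
      _ = (b • circF (fun t : Fin n => if t = 0 then (1:ℝ) else if t = 1 then -α else 0))
            * circF (fun t : Fin n => α ^ t.val) := by rw [hAB]
      _ = b • ((1 - α^(n-2)*α^2) • (1 : Matrix (Fin n) (Fin n) ℝ)) := by
          rw [Matrix.smul_mul, hWS]
      _ = (γ * pn) • (1 : Matrix (Fin n) (Fin n) ℝ) := by rw [smul_smul, ← hGp]
      _ = γ • (pn • (1 : Matrix (Fin n) (Fin n) ℝ)) := by rw [smul_smul]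
  -- gCirc = Qg * A
  have hM : gCirc n r (fun m => P (m + 1))
      = Qg n r * circF (fun d : Fin n => P (d.val + 1)) := by
    ext i j
    rw [gCirc_apply, Matrix.mul_apply]
    simp only [Qg_apply, circF, Matrix.of_apply, ite_mul, one_mul, zero_mul]
    rw [Finset.sum_ite_eq' Finset.univ (i * ((r:ℕ) : Fin n))
      (fun k => P ((j - k).val + 1))]
    simp
  -- Qg * Qgᵀ = 1
  have hinj : ∀ i j : Fin n, i * ((r:ℕ) : Fin n) = j * ((r:ℕ) : Fin n) → i = j := by
    intro i j h
    have h2 : ((i.val * r : ℕ) : Fin n) = ((j.val * r : ℕ) : Fin n) := by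
      rw [← mul_cast_eq, ← mul_cast_eq, h]
    have h3 : (i.val * r) % n = (j.val * r) % n := by
      have h' := congrArg Fin.val h2
      rwa [Fin.val_natCast, Fin.val_natCast] at h'
    have h4 : i.val % n = j.val % n := Nat.ModEq.cancel_right_of_coprime hgcd h3
    exact Fin.ext (by rwa [Nat.mod_eq_of_lt i.isLt, Nat.mod_eq_of_lt j.isLt] at h4)
  have hQQ : Qg n r * (Qg n r)ᵀ = 1 := by
    ext i j
    rw [Matrix.mul_apply, Matrix.one_apply]
    simp only [Matrix.transpose_apply, Qg_apply]
    have hptw : ∀ k : Fin n,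
        (if k = i * ((r:ℕ) : Fin n) then (1:ℝ) else 0)
          * (if k = j * ((r:ℕ) : Fin n) then 1 else 0)
        = if k = i * ((r:ℕ) : Fin n) then
            (if k = j * ((r:ℕ) : Fin n) then (1:ℝ) else 0) else 0 := by
      intro k; by_cases h : k = i * ((r:ℕ) : Fin n) <;> simp [h]
    rw [Finset.sum_congr rfl (fun k _ => hptw k),
      Finset.sum_ite_eq' Finset.univ (i * ((r:ℕ) : Fin n))
        (fun k => if k = j * ((r:ℕ) : Fin n) then (1:ℝ) else 0)]
    simp only [Finset.mem_univ, if_true]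
    by_cases hij : i = j
    · subst hij; simp
    · rw [if_neg (fun h => hij (hinj i j h)), if_neg hij]
  -- conclusion
  apply Matrix.inv_eq_right_inv
  rw [circ_eq_circF, hM, Matrix.mul_smul]
  have hmain : (Qg n r * circF (fun d : Fin n => P (d.val + 1)))
      * (circF (fun d : Fin n => c d.val) * (Qg n r)ᵀ)
      = pn • (1 : Matrix (Fin n) (Fin n) ℝ) := by
    rw [mul_assoc, ← mul_assoc (circF (fun d : Fin n => P (d.val + 1))), hACm,
      Matrix.smul_mul, Matrix.one_mul, Matrix.mul_smul, hQQ]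
  rw [hmain, smul_smul, one_div, inv_mul_cancel₀ hpnne, one_smul]
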